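/- Let M = bd = BD with b,d,B,D positive integers. Then #{(i,j,l) ∈ [M]³ : π₂∘Γ(b,d)(i,j) = π₂∘Ꞅ(B,D)(l,j)} ≤ min(M³/B, M³/d). -/

import Mathlib

/-- The partial transpose `Γ(b,d)` in 0-based coordinates. -/
def pt (d : ℕ) (p : ℕ × ℕ) : ℕ × ℕ :=
  (d * (p.1 / d) + p.2 % d, d * (p.2 / d) + p.1 % d)

/-- The left partial transpose `Ꞅ(B,D) = t ∘ Γ(B,D)` in 0-based coordinates. -/
def lpt (D : ℕ) (p : ℕ × ℕ) : ℕ × ℕ :=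
  (D * (p.2 / D) + p.1 % D, D * (p.1 / D) + p.2 % D)

/-!
A collision `(i, j, l)` satisfies `d ⌊j/d⌋ + (i mod d) = D ⌊l/D⌋ + (j mod D)`. Given `i` and `j`,
this equation fixes `⌊l/D⌋`, so `l` is determined by `l mod D`: there are at most `M · M · D`
collisions, and `M · M · D · B = M³`. Given `j` and `l`, it fixes `i mod d`, so `i` is determined
by `⌊i/d⌋ < b`: there are at most `b · M · M` collisions, and `b · M · M · d = M³`.
-/

open Finset

def collisions (d D M : ℕ) : Finset (ℕ × ℕ × ℕ) :=
  (range M ×ˢ range M ×ˢ range M).filter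
    (fun t => (pt d (t.1, t.2.1)).2 = (lpt D (t.2.2, t.2.1)).2)

theorem mem_collisions {d D M i j l : ℕ} :
    (i, j, l) ∈ collisions d D M ↔
      (i < M ∧ j < M ∧ l < M) ∧ d * (j / d) + i % d = D * (l / D) + j % D := by
  rw [collisions, Finset.mem_filter]
  simp only [Finset.mem_product, Finset.mem_range, pt, lpt]

theorem card_collisions_le_mul_mul_right (d : ℕ) {D : ℕ} (M : ℕ) (hD : 0 < D) :
    #(collisions d D M) ≤ M * M * D := by
  calc #(collisions d D M) ≤ #(range M ×ˢ range M ×ˢ range D) := by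
        refine card_le_card_of_injOn (fun t => (t.1, t.2.1, t.2.2 % D)) ?_ ?_
        · rintro ⟨i, j, l⟩ h
          obtain ⟨⟨hi, hj, -⟩, -⟩ := mem_collisions.1 h
          simp [hi, hj, Nat.mod_lt l hD]
        · rintro ⟨i, j, l⟩ h ⟨i', j', l'⟩ h' heq
          obtain ⟨rfl, rfl, hmod⟩ : i = i' ∧ j = j' ∧ l % D = l' % D := by simpa using heq
          have hdiv : l / D = l' / D := Nat.eq_of_mul_eq_mul_left hD <|
            Nat.add_right_cancel ((mem_collisions.1 h).2.symm.trans (mem_collisions.1 h').2)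
          rw [Nat.ext_div_mod hdiv hmod]
    _ = M * M * D := by simp [mul_assoc]

theorem card_collisions_le_mul_mul_left {b d : ℕ} (D : ℕ) {M : ℕ} (hd : 0 < d) (hM : M ≤ b * d) :
    #(collisions d D M) ≤ b * M * M := by
  calc #(collisions d D M) ≤ #(range b ×ˢ range M ×ˢ range M) := by
        refine card_le_card_of_injOn (fun t => (t.1 / d, t.2.1, t.2.2)) ?_ ?_
        · rintro ⟨i, j, l⟩ h
          obtain ⟨⟨hi, hj, hl⟩, -⟩ := mem_collisions.1 h
          simp [hj, hl, (Nat.div_lt_iff_lt_mul hd).2 (hi.trans_le hM)]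
        · rintro ⟨i, j, l⟩ h ⟨i', j', l'⟩ h' heq
          obtain ⟨hdiv, rfl, rfl⟩ : i / d = i' / d ∧ j = j' ∧ l = l' := by simpa using heq
          have hmod : i % d = i' % d :=
            Nat.add_left_cancel ((mem_collisions.1 h).2.trans (mem_collisions.1 h').2.symm)
          rw [Nat.ext_div_mod hdiv hmod]
    _ = b * M * M := by simp [mul_assoc]

theorem stmt_11_general (b d B D M : ℕ) (hd : 0 < d)
    (hD : 0 < D) (hM : M = b * d) (hM' : M = B * D) :
    (((Finset.range M) ×ˢ (Finset.range M) ×ˢ (Finset.range M)).filter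
        (fun t => (pt d (t.1, t.2.1)).2 = (lpt D (t.2.2, t.2.1)).2)).card * B
      ≤ M ^ 3 ∧
    (((Finset.range M) ×ˢ (Finset.range M) ×ˢ (Finset.range M)).filter
        (fun t => (pt d (t.1, t.2.1)).2 = (lpt D (t.2.2, t.2.1)).2)).card * d
      ≤ M ^ 3 := by
  constructor
  · calc #(collisions d D M) * B ≤ M * M * D * B :=
          Nat.mul_le_mul_right B (card_collisions_le_mul_mul_right d M hD)
      _ = M ^ 3 := by subst hM'; ring
  · calc #(collisions d D M) * d ≤ b * M * M * d :=
          Nat.mul_le_mul_right d (card_collisions_le_mul_mul_left D hd hM.le)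
      _ = M ^ 3 := by subst hM; ring

/-- For `M = bd = BD`, the count of `(i,j,l) ∈ [M]³` with
`π₂∘Γ(b,d)(i,j) = π₂∘Ꞅ(B,D)(l,j)` is at most `min(M³/B, M³/d)`. -/
theorem stmt_11 (b d B D M : ℕ) (hb : 0 < b) (hd : 0 < d) (hB : 0 < B)
    (hD : 0 < D) (hM : M = b * d) (hM' : M = B * D) :
    (((Finset.range M) ×ˢ (Finset.range M) ×ˢ (Finset.range M)).filter
        (fun t => (pt d (t.1, t.2.1)).2 = (lpt D (t.2.2, t.2.1)).2)).card * B
      ≤ M ^ 3 ∧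
    (((Finset.range M) ×ˢ (Finset.range M) ×ˢ (Finset.range M)).filter
        (fun t => (pt d (t.1, t.2.1)).2 = (lpt D (t.2.2, t.2.1)).2)).card * d
      ≤ M ^ 3 :=
  stmt_11_general b d B D M hd hD hM hM'
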